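/- Let N ≥ 2 and let π be a root of the Legendre polynomial P_{N−1} such that |π| ≤ |σ| for every root σ of P_{N−1}. Then |L_N(π)| ≥ |L_N(τ)| for all τ ∈ [−1, 1]; in other words, the root of P_{N−1} nearest zero is a global maximizer of |L_N| over [−1,1], and hence a global minimizer of the column-norm objective ω(τ_ξ) = α/|L_N(τ_ξ)|. -/
import Mathlib


open Polynomial

/-- Legendre polynomial of degree `n`, via Rodrigues' formula (normalized so `P_n(1) = 1`). -/
noncomputable def legendreP (n : ℕ) : Polynomial ℝ :=
  Polynomial.C ((2 ^ n * n.factorial : ℝ)⁻¹) * (⇑Polynomial.derivative)^[n] ((X ^ 2 - 1) ^ n)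

/-- Lobatto polynomial of degree `N`: `L_N(τ) = (τ² − 1)·P'_{N−1}(τ)`. -/
noncomputable def lobatto (N : ℕ) : Polynomial ℝ :=
  (X ^ 2 - 1) * Polynomial.derivative (legendreP (N - 1))

/-- Lagrange interpolating basis polynomial of index `i` over the nodes `τ`. -/
noncomputable def lagrangeBasis {M : ℕ} (τ : Fin M → ℝ) (i : Fin M) : Polynomial ℝ :=
  ∏ j ∈ Finset.univ.erase i, (Polynomial.C (τ i - τ j)⁻¹ * (X - Polynomial.C (τ j)))

/- ### Auxiliary lemmas -/

lemma aux_C2 : (C (2:ℝ)) = (2:ℝ[X]) := map_ofNat C 2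

lemma aux_base (n : ℕ) :
    (X^2-1 : ℝ[X]) * derivative ((X^2-1)^n) = 2*(n:ℝ[X]) * X * (X^2-1)^n := by
  cases n with
  | zero => simp
  | succ m =>
    rw [derivative_pow]
    simp only [derivative_sub, derivative_one, derivative_X_pow, map_natCast, aux_C2]
    push_cast
    ring

lemma aux_step (n : ℕ) : ∀ k : ℕ, (X^2-1 : ℝ[X]) * (⇑(derivative (R:=ℝ)))^[k+2] ((X^2-1)^n)
    = 2*((n:ℝ[X]) - (k:ℝ[X]) - 1) * X * (⇑(derivative (R:=ℝ)))^[k+1] ((X^2-1)^n)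
      + ((k:ℝ[X])+1)*(2*(n:ℝ[X]) - (k:ℝ[X])) * (⇑(derivative (R:=ℝ)))^[k] ((X^2-1)^n) := by
  intro k
  induction k with
  | zero =>
    have h := congrArg derivative (aux_base n)
    simp only [derivative_mul, derivative_sub, derivative_one, derivative_X_pow, derivative_X,
      derivative_natCast, derivative_ofNat, aux_C2, map_ofNat, map_natCast, Nat.cast_ofNat] at h
    simp only [Function.iterate_succ_apply', Function.iterate_zero_apply, Function.iterate_one]
    push_cast at h ⊢
    linear_combination h
  | succ k ih =>
    have h := congrArg derivative ih
    simp only [derivative_mul, derivative_sub, derivative_add, derivative_one, derivative_X_pow,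
      derivative_X, derivative_natCast, derivative_ofNat, aux_C2, map_ofNat, map_natCast,
      Nat.cast_ofNat, ← Function.iterate_succ_apply'] at h
    simp only [Function.iterate_succ_apply'] at h ⊢
    push_cast at h ⊢
    linear_combination h

/-- Legendre ODE. -/
lemma legendre_ode (n : ℕ) :
    (X^2-1 : ℝ[X]) * derivative (derivative (legendreP n)) + 2 * X * derivative (legendreP n)
      = (n:ℝ[X]) * ((n:ℝ[X])+1) * legendreP n := by
  have h := aux_step n n
  unfold legendreP
  simp only [derivative_C_mul, ← Function.iterate_succ_apply' (⇑(derivative (R:=ℝ)))]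
  show (X ^ 2 - 1) * (C (2 ^ n * (n.factorial:ℝ))⁻¹ * (⇑(derivative (R:=ℝ)))^[n+2] ((X ^ 2 - 1) ^ n)) +
      2 * X * (C (2 ^ n * (n.factorial:ℝ))⁻¹ * (⇑(derivative (R:=ℝ)))^[n+1] ((X ^ 2 - 1) ^ n)) =
    (n:ℝ[X]) * ((n:ℝ[X]) + 1) * (C (2 ^ n * (n.factorial:ℝ))⁻¹ * (⇑(derivative (R:=ℝ)))^[n] ((X ^ 2 - 1) ^ n))
  linear_combination C ((2 ^ n * n.factorial : ℝ)⁻¹) * h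

/-- Derivative of the Lobatto polynomial. -/
lemma lobatto_deriv (N : ℕ) (hN : 2 ≤ N) :
    derivative (lobatto N) = ((N:ℝ[X])-1) * (N:ℝ[X]) * legendreP (N-1) := by
  have h := legendre_ode (N-1)
  have hc : ((N-1 : ℕ) : ℝ[X]) = (N:ℝ[X]) - 1 := by
    rw [Nat.cast_sub (by omega)]; simp
  rw [hc] at h
  unfold lobatto
  simp only [derivative_mul, derivative_sub, derivative_one, derivative_X_pow, aux_C2,
    map_natCast, Nat.cast_ofNat]
  linear_combination h

lemma polyDerivCompNeg (p : ℝ[X]) : derivative (p.comp (-X)) = -((derivative p).comp (-X)) := by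
  rw [derivative_comp]
  simp

lemma iterCompNeg (p : ℝ[X]) : ∀ k, ((⇑(derivative (R:=ℝ)))^[k] p).comp (-X)
    = (-1:ℝ[X])^k * ((⇑(derivative (R:=ℝ)))^[k] (p.comp (-X))) := by
  intro k
  induction k with
  | zero => simp
  | succ k ih =>
    rw [Function.iterate_succ_apply', Function.iterate_succ_apply']
    have h := polyDerivCompNeg ((⇑(derivative (R:=ℝ)))^[k] p)
    rw [ih, derivative_mul] at h
    have hz : derivative ((-1:ℝ[X])^k) = 0 := by
      simp [derivative_pow]
    rw [hz] at h
    linear_combination h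

lemma u_comp_neg (n : ℕ) : (((X:ℝ[X])^2-1)^n).comp (-X) = ((X:ℝ[X])^2-1)^n := by
  simp [pow_comp, sub_comp, one_comp, X_comp]

lemma P_comp_neg (n : ℕ) : (legendreP n).comp (-X) = (-1:ℝ[X])^n * legendreP n := by
  unfold legendreP
  rw [mul_comp, C_comp, iterCompNeg, u_comp_neg]
  ring

lemma P_eval_neg (n : ℕ) (x : ℝ) : (legendreP n).eval (-x) = (-1:ℝ)^n * (legendreP n).eval x := by
  have h := congrArg (eval x) (P_comp_neg n)
  simpa [eval_comp] using h

lemma DP_comp_neg (n : ℕ) : (derivative (legendreP n)).comp (-X)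
    = (-1:ℝ[X])^(n+1) * derivative (legendreP n) := by
  have h := congrArg derivative (P_comp_neg n)
  rw [polyDerivCompNeg, derivative_mul] at h
  simp only [derivative_pow, derivative_neg, derivative_one, map_natCast] at h
  linear_combination -h

lemma L_eval_neg (N : ℕ) (hN : 2 ≤ N) (x : ℝ) :
    (lobatto N).eval (-x) = (-1:ℝ)^N * (lobatto N).eval x := by
  have h := congrArg (eval x) (DP_comp_neg (N-1))
  simp only [eval_comp, eval_neg, eval_X, eval_mul, eval_pow, eval_one] at h
  have hn : N - 1 + 1 = N := by omega
  unfold lobatto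
  simp only [eval_mul, eval_sub, eval_pow, eval_X, eval_one, eval_neg]
  rw [h, hn]
  ring

lemma L_abs_neg (N : ℕ) (hN : 2 ≤ N) (x : ℝ) :
    |(lobatto N).eval (-x)| = |(lobatto N).eval x| := by
  rw [L_eval_neg N hN, abs_mul, abs_pow, abs_neg, abs_one, one_pow, one_mul]

lemma L_sq_neg (N : ℕ) (hN : 2 ≤ N) (x : ℝ) :
    ((lobatto N).eval (-x))^2 = ((lobatto N).eval x)^2 := by
  rw [← sq_abs, L_abs_neg N hN, sq_abs]

lemma P_sq_neg (n : ℕ) (x : ℝ) :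
    ((legendreP n).eval (-x))^2 = ((legendreP n).eval x)^2 := by
  rw [P_eval_neg, mul_pow, ← pow_mul, pow_mul']
  norm_num

set_option maxHeartbeats 1000000 in
theorem legendre_root_nearest_zero_maximizes_lobatto {N : ℕ} (hN : 2 ≤ N)
    (x0 : ℝ) (hroot : (legendreP (N - 1)).eval x0 = 0)
    (hnear : ∀ σ : ℝ, (legendreP (N - 1)).eval σ = 0 → |x0| ≤ |σ|) :
    (∀ τ ∈ Set.Icc (-1 : ℝ) 1, |(lobatto N).eval τ| ≤ |(lobatto N).eval x0|) ∧
      ∀ α : ℝ, 0 < α → ∀ τ ∈ Set.Icc (-1 : ℝ) 1, (lobatto N).eval τ ≠ 0 →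
        α / |(lobatto N).eval x0| ≤ α / |(lobatto N).eval τ| := by
  have hDL := lobatto_deriv N hN
  set P : ℝ[X] := legendreP (N-1) with hPdef
  set L : ℝ[X] := lobatto N with hLdef
  set K : ℝ := ((N:ℝ)-1) * N with hK
  have hN2 : (2:ℝ) ≤ N := by exact_mod_cast hN
  have hKpos : 0 < K := by rw [hK]; nlinarith
  have hevalDL : ∀ t : ℝ, (derivative L).eval t = K * P.eval t := by
    intro t; rw [hDL]; simp [hK]
  have hld : ∀ t : ℝ, deriv (fun s : ℝ => L.eval s) t = K * P.eval t := by
    intro t; rw [Polynomial.deriv]; exact hevalDL t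
  -- the energy function H
  set HP : ℝ[X] := (((N:ℝ[X])-1) * (N:ℝ[X])) * L^2 + (1 - X^2) * (derivative L)^2 with hHPdef
  have hdHP : derivative HP = -(2*X) * (derivative L)^2 := by
    have h2 : L = (X^2-1) * derivative P := rfl
    have h3 : derivative (derivative L) = ((N:ℝ[X])-1) * (N:ℝ[X]) * derivative P := by
      have h4 := congrArg derivative hDL
      have h5 : derivative (((N:ℝ[X])-1) * (N:ℝ[X])) = 0 := by simp
      rw [derivative_mul, h5, zero_mul, zero_add] at h4
      exact h4
    rw [hHPdef]
    simp only [derivative_add, derivative_mul, derivative_sub, derivative_one, derivative_pow,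
      derivative_X_pow, derivative_X, derivative_natCast, aux_C2, map_natCast, Nat.cast_ofNat]
    linear_combination (2 * derivative L * (((N:ℝ[X])-1) * (N:ℝ[X]))) * h2
      + (2 * derivative L * (1 - X^2)) * h3
  set H : ℝ → ℝ := fun t => HP.eval t with hH
  have hHeval : ∀ t : ℝ, H t = K * (L.eval t)^2 + (1-t^2) * (K * P.eval t)^2 := by
    intro t
    rw [hH]
    simp only [hHPdef, eval_add, eval_mul, eval_sub, eval_pow, eval_X, eval_one, eval_natCast,
      hevalDL t, hK]
  have hderivH : ∀ t : ℝ, deriv H t = -(2*t) * (K * P.eval t)^2 := by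
    intro t
    rw [hH]
    rw [Polynomial.deriv, hdHP]
    simp only [eval_mul, eval_neg, eval_pow, eval_X, eval_ofNat, hevalDL t]
  have hHanti : AntitoneOn H (Set.Ici (0:ℝ)) := by
    apply antitoneOn_of_deriv_nonpos (convex_Ici 0)
    · exact (HP.continuous).continuousOn
    · exact (HP.differentiable).differentiableOn
    · intro t ht
      rw [interior_Ici] at ht
      rw [hderivH]
      have h6 := sq_nonneg (K * P.eval t)
      have h7 : (0:ℝ) < t := ht
      nlinarith
  have hHeven : ∀ t : ℝ, H (-t) = H t := by
    intro t
    rw [hHeval, hHeval, L_sq_neg N hN]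
    have h8 : (K * P.eval (-t))^2 = (K * P.eval t)^2 := by
      rw [mul_pow, mul_pow, P_sq_neg, hK]
      ring
    rw [h8, neg_sq]
  -- facts at x0
  have hDLx0 : (derivative L).eval x0 = 0 := by rw [hevalDL, hroot, mul_zero]
  have hHx0 : H x0 = K * (L.eval x0)^2 := by
    rw [hHeval, hroot]
    ring
  set m : ℝ := |x0| with hm
  have hHabs : ∀ t : ℝ, H |t| = H t := by
    intro t
    rcases abs_choice t with h | h
    · rw [h]
    · rw [h, hHeven]
  have habsLm : |L.eval m| = |L.eval x0| := by
    rcases abs_choice x0 with h | h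
    · rw [hm, h]
    · rw [hm, h, L_abs_neg N hN]
  have habsLnm : |L.eval (-m)| = |L.eval x0| := by
    rcases abs_choice x0 with h | h
    · rw [hm, h, L_abs_neg N hN]
    · rw [hm, h, neg_neg]
  -- main bound
  have main : ∀ τ ∈ Set.Icc (-1 : ℝ) 1, |L.eval τ| ≤ |L.eval x0| := by
    rintro τ ⟨hτ1, hτ2⟩
    rcases le_or_gt m |τ| with hcase | hcase
    · -- |τ| ≥ m : use the energy function
      have h9 : H |τ| ≤ H m := hHanti (Set.mem_Ici.mpr (abs_nonneg x0)) (Set.mem_Ici.mpr (abs_nonneg τ)) hcase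
      rw [hHabs, hHabs] at h9
      have h10 := hHeval τ
      have hτsq : τ^2 ≤ 1 := by nlinarith
      have h11 : K * (L.eval τ)^2 ≤ K * (L.eval x0)^2 := by
        nlinarith [sq_nonneg (K * P.eval τ)]
      have h12 : (L.eval τ)^2 ≤ (L.eval x0)^2 := le_of_mul_le_mul_left (by linarith) hKpos
      nlinarith [sq_abs (L.eval τ), sq_abs (L.eval x0), abs_nonneg (L.eval τ), abs_nonneg (L.eval x0)]
    · -- |τ| < m : L is monotone on [-m, m]
      have hmpos : 0 < m := lt_of_le_of_lt (abs_nonneg τ) hcase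
      have hnoroot : ∀ c ∈ Set.Ioo (-m) m, P.eval c ≠ 0 := by
        rintro c ⟨hc1, hc2⟩ hc0
        have := hnear c hc0
        have : |c| < m := abs_lt.mpr ⟨hc1, hc2⟩
        linarith [hnear c hc0]
      have hP0 : P.eval 0 ≠ 0 := hnoroot 0 ⟨by linarith, hmpos⟩
      -- sign constancy of P on Ioo (-m) m
      have hsign : ∀ t ∈ Set.Ioo (-m) m, P.eval t ≠ 0 → ((0 < P.eval 0 → 0 < P.eval t) ∧ (P.eval 0 < 0 → P.eval t < 0)) := by
        rintro t ⟨ht1, ht2⟩ htne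
        have habs_t : |t| < m := abs_lt.mpr ⟨ht1, ht2⟩
        constructor <;> intro h0 <;> by_contra hcon <;> push_neg at hcon
        · -- P 0 > 0, suppose P t ≤ 0, so P t < 0
          have hPt : P.eval t < 0 := lt_of_le_of_ne hcon htne
          have hivt : (0:ℝ) ∈ Set.uIcc (P.eval t) (P.eval 0) :=
            Set.mem_uIcc.mpr (Or.inl ⟨hPt.le, h0.le⟩)
          have hsub := intermediate_value_uIcc (a := t) (b := 0) (f := fun s => P.eval s)
            (P.continuous.continuousOn)
          obtain ⟨c, hcmem, hceq⟩ := hsub hivt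
          have hcabs : |c| ≤ |t| := by
            rw [Set.uIcc_eq_union] at hcmem
            rcases hcmem with h | h
            · exact abs_le.mpr ⟨le_trans (neg_abs_le t) h.1, le_trans h.2 (abs_nonneg t)⟩
            · exact abs_le.mpr ⟨le_trans (neg_nonpos_of_nonneg (abs_nonneg t)) h.1, le_trans h.2 (le_abs_self t)⟩
          have : |c| < m := lt_of_le_of_lt hcabs habs_t
          exact hnoroot c ⟨by cases abs_lt.mp this; linarith, (abs_lt.mp this).2⟩ hceq
        · have hPt : 0 < P.eval t := lt_of_le_of_ne hcon (Ne.symm htne)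
          have hivt : (0:ℝ) ∈ Set.uIcc (P.eval t) (P.eval 0) :=
            Set.mem_uIcc.mpr (Or.inr ⟨h0.le, hPt.le⟩)
          have hsub := intermediate_value_uIcc (a := t) (b := 0) (f := fun s => P.eval s)
            (P.continuous.continuousOn)
          obtain ⟨c, hcmem, hceq⟩ := hsub hivt
          have hcabs : |c| ≤ |t| := by
            rw [Set.uIcc_eq_union] at hcmem
            rcases hcmem with h | h
            · exact abs_le.mpr ⟨le_trans (neg_abs_le t) h.1, le_trans h.2 (abs_nonneg t)⟩
            · exact abs_le.mpr ⟨le_trans (neg_nonpos_of_nonneg (abs_nonneg t)) h.1, le_trans h.2 (le_abs_self t)⟩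
          have : |c| < m := lt_of_le_of_lt hcabs habs_t
          exact hnoroot c ⟨(abs_lt.mp this).1, (abs_lt.mp this).2⟩ hceq
      have hτmem : τ ∈ Set.Icc (-m) m := by
        have := abs_lt.mp hcase
        exact ⟨this.1.le, this.2.le⟩
      have hmmem : m ∈ Set.Icc (-m) m := ⟨by linarith, le_refl m⟩
      have hnmmem : -m ∈ Set.Icc (-m) m := ⟨le_refl _, by linarith⟩
      rcases hP0.lt_or_gt with hneg | hpos
      · -- P ≤ 0 on interior, L antitone
        have hanti : AntitoneOn (fun s : ℝ => L.eval s) (Set.Icc (-m) m) := by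
          apply antitoneOn_of_deriv_nonpos (convex_Icc _ _)
            (L.continuous.continuousOn) (L.differentiable.differentiableOn)
          intro t ht
          rw [interior_Icc] at ht
          rw [hld]
          rcases eq_or_ne (P.eval t) 0 with h | h
          · rw [h, mul_zero]
          · have := ((hsign t ht h).2 hneg)
            nlinarith
        have h13 : L.eval m ≤ L.eval τ := hanti hτmem hmmem hτmem.2
        have h14 : L.eval τ ≤ L.eval (-m) := hanti hnmmem hτmem hτmem.1
        refine abs_le.mpr ⟨?_, ?_⟩
        · calc -|L.eval x0| = -|L.eval m| := by rw [habsLm]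
            _ ≤ L.eval m := neg_abs_le _
            _ ≤ L.eval τ := h13
        · calc L.eval τ ≤ L.eval (-m) := h14
            _ ≤ |L.eval (-m)| := le_abs_self _
            _ = |L.eval x0| := habsLnm
      · -- P ≥ 0 on interior, L monotone
        have hmono : MonotoneOn (fun s : ℝ => L.eval s) (Set.Icc (-m) m) := by
          apply monotoneOn_of_deriv_nonneg (convex_Icc _ _)
            (L.continuous.continuousOn) (L.differentiable.differentiableOn)
          intro t ht
          rw [interior_Icc] at ht
          rw [hld]
          rcases eq_or_ne (P.eval t) 0 with h | h
          · rw [h, mul_zero]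
          · have := ((hsign t ht h).1 hpos)
            nlinarith
        have h13 : L.eval (-m) ≤ L.eval τ := hmono hnmmem hτmem hτmem.1
        have h14 : L.eval τ ≤ L.eval m := hmono hτmem hmmem hτmem.2
        refine abs_le.mpr ⟨?_, ?_⟩
        · calc -|L.eval x0| = -|L.eval (-m)| := by rw [habsLnm]
            _ ≤ L.eval (-m) := neg_abs_le _
            _ ≤ L.eval τ := h13
        · calc L.eval τ ≤ L.eval m := h14
            _ ≤ |L.eval m| := le_abs_self _
            _ = |L.eval x0| := habsLm
  refine ⟨main, ?_⟩
  intro α hα τ hτ hne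
  have h1 := main τ hτ
  have h2 : 0 < |L.eval τ| := abs_pos.mpr hne
  gcongr
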